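/- Let R be an extensional relational doctrine with quotients on a category C. Then R is balanced and all objects of C are R-projective if and only if every surjective arrow of C is a split epimorphism. -/

import Mathlib

open CategoryTheory

universe w w' v v' u u'

/-- A relational doctrine on a category `C` with fibres `P X Y` (posets):
a contravariant functor `(C^op × C^op) → Pos` with identities, composition and converse. -/
structure RelDoctrine (C : Type u) [Category.{v} C] (P : C → C → Type w)
    [∀ X Y : C, PartialOrder (P X Y)] where
  reidx : ∀ {A X B Y : C}, (A ⟶ X) → (B ⟶ Y) → P X Y → P A B
  reidx_mono : ∀ {A X B Y : C} (f : A ⟶ X) (g : B ⟶ Y), Monotone (reidx f g)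
  reidx_id : ∀ {X Y : C} (α : P X Y), reidx (𝟙 X) (𝟙 Y) α = α
  reidx_comp :
    ∀ {A X X' B Y Y' : C} (f : A ⟶ X) (f' : X ⟶ X') (g : B ⟶ Y) (g' : Y ⟶ Y') (α : P X' Y'),
      reidx (f ≫ f') (g ≫ g') α = reidx f g (reidx f' g' α)
  d : ∀ X : C, P X X
  comp : ∀ {X Y Z : C}, P X Y → P Y Z → P X Z
  comp_mono : ∀ {X Y Z : C} {α α' : P X Y} {β β' : P Y Z},
      α ≤ α' → β ≤ β' → comp α β ≤ comp α' β'
  conv : ∀ {X Y : C}, P X Y → P Y X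
  conv_mono : ∀ {X Y : C} {α α' : P X Y}, α ≤ α' → conv α ≤ conv α'
  d_le_reidx : ∀ {X Y : C} (f : X ⟶ Y), d X ≤ reidx f f (d Y)
  comp_reidx_le : ∀ {X A Y B Z W : C} (f : X ⟶ A) (g : Y ⟶ B) (h : Z ⟶ W)
      (α : P A B) (β : P B W),
      comp (reidx f g α) (reidx g h β) ≤ reidx f h (comp α β)
  conv_reidx_le : ∀ {X A Y B : C} (f : X ⟶ A) (g : Y ⟶ B) (α : P A B),
      conv (reidx f g α) ≤ reidx g f (conv α)
  comp_assoc : ∀ {X Y Z W : C} (α : P X Y) (β : P Y Z) (γ : P Z W),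
      comp α (comp β γ) = comp (comp α β) γ
  d_comp : ∀ {X Y : C} (α : P X Y), comp (d X) α = α
  comp_d : ∀ {X Y : C} (α : P X Y), comp α (d Y) = α
  conv_comp : ∀ {X Y Z : C} (α : P X Y) (β : P Y Z),
      conv (comp α β) = comp (conv β) (conv α)
  conv_d : ∀ X : C, conv (d X) = d X
  conv_conv : ∀ {X Y : C} (α : P X Y), conv (conv α) = α

namespace RelDoctrine

variable {C : Type u} [Category.{v} C] {P : C → C → Type w} [∀ X Y : C, PartialOrder (P X Y)]

/-- The graph of an arrow `f : X ⟶ Y` is `R(f, id_Y)(d_Y)`. -/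
def gr (D : RelDoctrine C P) {X Y : C} (f : X ⟶ Y) : P X Y :=
  D.reidx f (𝟙 Y) (D.d Y)

/-- `α` is functional: `α° ; α ≤ d_Y`. -/
def Functional (D : RelDoctrine C P) {X Y : C} (α : P X Y) : Prop :=
  D.comp (D.conv α) α ≤ D.d Y

/-- `α` is total: `d_X ≤ α ; α°`. -/
def Total (D : RelDoctrine C P) {X Y : C} (α : P X Y) : Prop :=
  D.d X ≤ D.comp α (D.conv α)

/-- `α` is injective: `α ; α° ≤ d_X`. -/
def InjectiveRel (D : RelDoctrine C P) {X Y : C} (α : P X Y) : Prop :=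
  D.comp α (D.conv α) ≤ D.d X

/-- `α` is surjective: `d_Y ≤ α° ; α`. -/
def SurjectiveRel (D : RelDoctrine C P) {X Y : C} (α : P X Y) : Prop :=
  D.d Y ≤ D.comp (D.conv α) α

/-- The kernel of an arrow `f` is `gr(f) ; gr(f)°`. -/
def kernelOf (D : RelDoctrine C P) {X Y : C} (f : X ⟶ Y) : P X X :=
  D.comp (D.gr f) (D.conv (D.gr f))

/-- An `R`-equivalence relation: reflexive, symmetric, transitive. -/
def IsEquivRel (D : RelDoctrine C P) {X : C} (ρ : P X X) : Prop :=
  D.d X ≤ ρ ∧ D.conv ρ ≤ ρ ∧ D.comp ρ ρ ≤ ρ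

/-- `q : X ⟶ W` is a quotient arrow of the equivalence relation `ρ` on `X`. -/
def IsQuotientArrow (D : RelDoctrine C P) {X W : C} (ρ : P X X) (q : X ⟶ W) : Prop :=
  ρ ≤ D.kernelOf q ∧
    ∀ (Z : C) (f : X ⟶ Z), ρ ≤ D.kernelOf f → ∃! h : W ⟶ Z, f = q ≫ h

/-- The quotient arrow `q` of `ρ` is effective: `ρ = gr(q) ; gr(q)°`. -/
def Effective (D : RelDoctrine C P) {X W : C} (ρ : P X X) (q : X ⟶ W) : Prop :=
  ρ = D.kernelOf q

/-- The arrow `q` is descent: `d_W ≤ gr(q)° ; gr(q)`. -/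
def Descent (D : RelDoctrine C P) {X W : C} (q : X ⟶ W) : Prop :=
  D.d W ≤ D.comp (D.conv (D.gr q)) (D.gr q)

/-- `D` has quotients: every equivalence relation admits an effective descent quotient arrow. -/
def HasQuotients (D : RelDoctrine C P) : Prop :=
  ∀ (X : C) (ρ : P X X), D.IsEquivRel ρ →
    ∃ (W : C) (q : X ⟶ W), D.IsQuotientArrow ρ q ∧ D.Effective ρ q ∧ D.Descent q

/-- `f ≐ g` : the arrows `f, g` are `R`-equal, i.e. `d_X ≤ R(f,g)(d_Y)`. -/
def RExtEq (D : RelDoctrine C P) {X Y : C} (f g : X ⟶ Y) : Prop :=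
  D.d X ≤ D.reidx f g (D.d Y)

/-- `D` is extensional: `R`-equal arrows are equal. -/
def Extensional (D : RelDoctrine C P) : Prop :=
  ∀ (X Y : C) (f g : X ⟶ Y), D.RExtEq f g → f = g

/-- `D` is balanced: every bijective arrow is an isomorphism. -/
def BalancedDoc (D : RelDoctrine C P) : Prop :=
  ∀ (X Y : C) (f : X ⟶ Y), D.InjectiveRel (D.gr f) → D.SurjectiveRel (D.gr f) → IsIso f

/-- `Q` is `R`-projective with respect to quotient arrows. -/
def ProjectiveObj (D : RelDoctrine C P) (Q : C) : Prop :=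
  ∀ (X Y : C) (f : Q ⟶ Y) (q : X ⟶ Y) (ρ : P X X),
    D.IsEquivRel ρ → D.IsQuotientArrow ρ q → ∃ h : Q ⟶ X, f = h ≫ q

/-- Descent data with respect to equivalence relations `ρ` and `σ` : `ρ° ; α ; σ ≤ α`. -/
def Des (D : RelDoctrine C P) {X Y : C} (ρ : P X X) (σ : P Y Y) (α : P X Y) : Prop :=
  D.comp (D.comp (D.conv ρ) α) σ ≤ α

/-- The rule of unique choice: every functional total relation contains the graph of an arrow. -/
def RUC (D : RelDoctrine C P) : Prop :=
  ∀ (X Y : C) (α : P X Y), D.Functional α → D.Total α → ∃ f : X ⟶ Y, D.gr f ≤ α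

end RelDoctrine

variable {C : Type u} [Category.{v} C] {P : C → C → Type w} [∀ X Y : C, PartialOrder (P X Y)]

/-!
A surjective arrow `f` factors as `f = q ≫ h` through the effective descent quotient `q` of its
kernel; effectiveness and descent of `q` make `h` injective, and `h` is surjective because `f` is.
So if bijective arrows are isomorphisms and `Y` is projective, lifting `inv h` along `q` gives a section of `f`.
Conversely, if surjective arrows split, then every quotient arrow (being surjective) splits, which
gives projectivity; and a split surjection `s ≫ f = 𝟙` with `f` injective has `f ≫ s` `R`-equal
to the identity, hence equal to it by extensionality.
-/

namespace RelDoctrine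

variable (D : RelDoctrine C P)

theorem conv_reidx {X A Y B : C} (f : X ⟶ A) (g : Y ⟶ B) (α : P A B) :
    D.conv (D.reidx f g α) = D.reidx g f (D.conv α) := by
  refine le_antisymm (D.conv_reidx_le f g α) ?_
  have h := D.conv_mono (D.conv_reidx_le g f (D.conv α))
  rwa [D.conv_conv, D.conv_conv] at h

theorem gr_id (X : C) : D.gr (𝟙 X) = D.d X :=
  D.reidx_id _

theorem conv_gr {X Y : C} (f : X ⟶ Y) : D.conv (D.gr f) = D.reidx (𝟙 Y) f (D.d Y) := by
  rw [gr, conv_reidx, D.conv_d]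

theorem reidx_eq_comp_gr {X A Y B : C} (f : X ⟶ A) (g : Y ⟶ B) (α : P A B) :
    D.reidx f g α = D.comp (D.comp (D.gr f) α) (D.conv (D.gr g)) := by
  apply le_antisymm
  · have hX : D.d X ≤ D.reidx (𝟙 X) f (D.gr f) := by
      rw [gr, ← D.reidx_comp, Category.id_comp, Category.comp_id]
      exact D.d_le_reidx f
    have hY : D.d Y ≤ D.reidx g (𝟙 Y) (D.conv (D.gr g)) := by
      rw [conv_gr, ← D.reidx_comp, Category.id_comp, Category.comp_id]
      exact D.d_le_reidx g
    calc D.reidx f g α = D.comp (D.comp (D.d X) (D.reidx f g α)) (D.d Y) := by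
          rw [D.d_comp, D.comp_d]
      _ ≤ D.comp (D.comp (D.reidx (𝟙 X) f (D.gr f)) (D.reidx f g α))
            (D.reidx g (𝟙 Y) (D.conv (D.gr g))) :=
          D.comp_mono (D.comp_mono hX le_rfl) hY
      _ ≤ D.comp (D.reidx (𝟙 X) g (D.comp (D.gr f) α)) (D.reidx g (𝟙 Y) (D.conv (D.gr g))) :=
          D.comp_mono (D.comp_reidx_le _ _ _ _ _) le_rfl
      _ ≤ D.reidx (𝟙 X) (𝟙 Y) (D.comp (D.comp (D.gr f) α) (D.conv (D.gr g))) :=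
          D.comp_reidx_le _ _ _ _ _
      _ = D.comp (D.comp (D.gr f) α) (D.conv (D.gr g)) := D.reidx_id _
  · have hf : D.comp (D.gr f) α ≤ D.reidx f (𝟙 B) α := by
      have h := D.comp_reidx_le f (𝟙 A) (𝟙 B) (D.d A) α
      rwa [D.reidx_id, D.d_comp] at h
    calc D.comp (D.comp (D.gr f) α) (D.conv (D.gr g))
        ≤ D.comp (D.reidx f (𝟙 B) α) (D.reidx (𝟙 B) g (D.d B)) := by
          rw [conv_gr]; exact D.comp_mono hf le_rfl
      _ ≤ D.reidx f g (D.comp α (D.d B)) := D.comp_reidx_le _ _ _ _ _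
      _ = D.reidx f g α := by rw [D.comp_d]

theorem gr_comp {X Y Z : C} (f : X ⟶ Y) (g : Y ⟶ Z) :
    D.gr (f ≫ g) = D.comp (D.gr f) (D.gr g) := by
  have h : D.gr (f ≫ g) = D.reidx f (𝟙 Z) (D.gr g) := by
    rw [gr, gr, ← D.reidx_comp, Category.comp_id]
  rw [h, reidx_eq_comp_gr, gr_id, D.conv_d, D.comp_d]

theorem functional_gr {X Y : C} (f : X ⟶ Y) : D.Functional (D.gr f) := by
  have h := D.comp_reidx_le (𝟙 Y) f (𝟙 Y) (D.d Y) (D.d Y)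
  rw [D.reidx_id, D.d_comp] at h
  rwa [Functional, conv_gr]

theorem total_gr {X Y : C} (f : X ⟶ Y) : D.Total (D.gr f) := by
  have h := D.d_le_reidx f
  rwa [reidx_eq_comp_gr, D.comp_d] at h

theorem isEquivRel_kernelOf {X Y : C} (f : X ⟶ Y) : D.IsEquivRel (D.kernelOf f) := by
  refine ⟨D.total_gr f, by rw [kernelOf, D.conv_comp, D.conv_conv], ?_⟩
  calc D.comp (D.kernelOf f) (D.kernelOf f)
      = D.comp (D.comp (D.gr f) (D.comp (D.conv (D.gr f)) (D.gr f))) (D.conv (D.gr f)) := by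
        simp only [kernelOf, D.comp_assoc]
    _ ≤ D.comp (D.comp (D.gr f) (D.d Y)) (D.conv (D.gr f)) :=
        D.comp_mono (D.comp_mono le_rfl (D.functional_gr f)) le_rfl
    _ = D.kernelOf f := by rw [D.comp_d, kernelOf]

section Relations

variable {X Y Z : C}

theorem le_conv_of_comp_eq_d {β : P Y X} {α : P X Y} (h : D.comp β α = D.d Y)
    (hα : D.Total α) : β ≤ D.conv α :=
  calc β = D.comp β (D.d X) := (D.comp_d β).symm
    _ ≤ D.comp β (D.comp α (D.conv α)) := D.comp_mono le_rfl hα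
    _ = D.conv α := by rw [D.comp_assoc, h, D.d_comp]

theorem conv_le_of_comp_eq_d {β : P Y X} {α : P X Y} (h : D.comp β α = D.d Y)
    (hα : D.InjectiveRel α) : D.conv α ≤ β :=
  calc D.conv α = D.comp (D.comp β α) (D.conv α) := by rw [h, D.d_comp]
    _ = D.comp β (D.comp α (D.conv α)) := (D.comp_assoc _ _ _).symm
    _ ≤ D.comp β (D.d X) := D.comp_mono le_rfl hα
    _ = β := D.comp_d β

theorem surjectiveRel_comp {α : P X Y} {β : P Y Z} (hα : D.SurjectiveRel α)
    (hβ : D.SurjectiveRel β) : D.SurjectiveRel (D.comp α β) :=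
  calc D.d Z ≤ D.comp (D.conv β) (D.comp (D.d Y) β) := by rw [D.d_comp]; exact hβ
    _ ≤ D.comp (D.conv β) (D.comp (D.comp (D.conv α) α) β) :=
        D.comp_mono le_rfl (D.comp_mono hα le_rfl)
    _ = D.comp (D.conv (D.comp α β)) (D.comp α β) := by
        rw [D.conv_comp, D.comp_assoc, D.comp_assoc, D.comp_assoc]

theorem surjectiveRel_of_comp {α : P X Y} {β : P Y Z} (hα : D.Functional α)
    (hαβ : D.SurjectiveRel (D.comp α β)) : D.SurjectiveRel β :=
  calc D.d Z ≤ D.comp (D.conv (D.comp α β)) (D.comp α β) := hαβ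
    _ = D.comp (D.conv β) (D.comp (D.comp (D.conv α) α) β) := by
        rw [D.conv_comp, D.comp_assoc, D.comp_assoc, D.comp_assoc]
    _ ≤ D.comp (D.conv β) (D.comp (D.d Y) β) := D.comp_mono le_rfl (D.comp_mono hα le_rfl)
    _ = D.comp (D.conv β) β := by rw [D.d_comp]

theorem injectiveRel_of_comp {α : P X Y} {β : P Y Z} (hα : D.Functional α)
    (hα' : D.SurjectiveRel α)
    (hker : D.comp (D.comp α β) (D.conv (D.comp α β)) ≤ D.comp α (D.conv α)) :
    D.InjectiveRel β := by
  have hβ : β ≤ D.comp (D.conv α) (D.comp α β) :=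
    calc β = D.comp (D.d Y) β := (D.d_comp β).symm
      _ ≤ D.comp (D.comp (D.conv α) α) β := D.comp_mono hα' le_rfl
      _ = D.comp (D.conv α) (D.comp α β) := (D.comp_assoc _ _ _).symm
  have hβ' : D.conv β ≤ D.comp (D.conv (D.comp α β)) α := by
    simpa only [D.conv_comp, D.conv_conv] using D.conv_mono hβ
  calc D.comp β (D.conv β)
      ≤ D.comp (D.comp (D.conv α) (D.comp α β)) (D.comp (D.conv (D.comp α β)) α) :=
        D.comp_mono hβ hβ'
    _ = D.comp (D.comp (D.conv α) (D.comp (D.comp α β) (D.conv (D.comp α β)))) α := by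
        simp only [D.comp_assoc]
    _ ≤ D.comp (D.comp (D.conv α) (D.comp α (D.conv α))) α :=
        D.comp_mono (D.comp_mono le_rfl hker) le_rfl
    _ = D.comp (D.comp (D.conv α) α) (D.comp (D.conv α) α) := by
        simp only [D.comp_assoc]
    _ ≤ D.comp (D.d Y) (D.d Y) := D.comp_mono hα hα
    _ = D.d Y := D.d_comp _

end Relations

theorem surjectiveRel_gr_of_comp_eq_id {X Y : C} {s : Y ⟶ X} {f : X ⟶ Y} (h : s ≫ f = 𝟙 Y) :
    D.SurjectiveRel (D.gr f) := by
  have hsf : D.comp (D.gr s) (D.gr f) = D.d Y := by rw [← gr_comp, h, gr_id]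
  calc D.d Y = D.comp (D.gr s) (D.gr f) := hsf.symm
    _ ≤ D.comp (D.conv (D.gr f)) (D.gr f) :=
        D.comp_mono (D.le_conv_of_comp_eq_d hsf (D.total_gr f)) le_rfl

theorem comp_eq_id_of_injectiveRel (hext : D.Extensional) {X Y : C} {s : Y ⟶ X} {f : X ⟶ Y}
    (hf : D.InjectiveRel (D.gr f)) (h : s ≫ f = 𝟙 Y) : f ≫ s = 𝟙 X := by
  have hsf : D.comp (D.gr s) (D.gr f) = D.d Y := by rw [← gr_comp, h, gr_id]
  apply hext
  show D.d X ≤ D.gr (f ≫ s)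
  calc D.d X ≤ D.comp (D.gr f) (D.conv (D.gr f)) := D.total_gr f
    _ ≤ D.comp (D.gr f) (D.gr s) := D.comp_mono le_rfl (D.conv_le_of_comp_eq_d hsf hf)
    _ = D.gr (f ≫ s) := (D.gr_comp f s).symm

/-- Comparing `q` with an effective descent quotient `q'` of the same relation, each factors
through the other, so `q = q' ≫ i` with `i` split epi. -/
theorem surjectiveRel_gr_of_isQuotientArrow (hquot : D.HasQuotients) {X Y : C} {ρ : P X X}
    {q : X ⟶ Y} (hρ : D.IsEquivRel ρ) (hq : D.IsQuotientArrow ρ q) :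
    D.SurjectiveRel (D.gr q) := by
  obtain ⟨W, q', hq', -, hdesc'⟩ := hquot X ρ hρ
  obtain ⟨i, hi, -⟩ := hq'.2 Y q hq.1
  obtain ⟨j, hj, -⟩ := hq.2 W q' hq'.1
  have hji : j ≫ i = 𝟙 Y :=
    (hq.2 Y q hq.1).unique (by rw [← Category.assoc, ← hj, ← hi]) (Category.comp_id q).symm
  rw [hi, gr_comp]
  exact D.surjectiveRel_comp hdesc' (D.surjectiveRel_gr_of_comp_eq_id hji)

theorem exists_section_of_surjectiveRel (hquot : D.HasQuotients) (hbal : D.BalancedDoc)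
    {X Y : C} (hY : D.ProjectiveObj Y) {f : X ⟶ Y} (hf : D.SurjectiveRel (D.gr f)) :
    ∃ s : Y ⟶ X, s ≫ f = 𝟙 Y := by
  obtain ⟨W, q, hq, heff, hdesc⟩ := hquot X (D.kernelOf f) (D.isEquivRel_kernelOf f)
  obtain ⟨h, rfl, -⟩ := hq.2 Y f le_rfl
  have hgr : D.gr (q ≫ h) = D.comp (D.gr q) (D.gr h) := D.gr_comp q h
  have hinj : D.InjectiveRel (D.gr h) :=
    D.injectiveRel_of_comp (D.functional_gr q) hdesc (hgr ▸ heff.le)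
  have hsurj : D.SurjectiveRel (D.gr h) :=
    D.surjectiveRel_of_comp (D.functional_gr q) (hgr ▸ hf)
  have := hbal W Y h hinj hsurj
  obtain ⟨s, hs⟩ := hY X W (inv h) q _ (D.isEquivRel_kernelOf (q ≫ h)) hq
  exact ⟨s, by rw [← Category.assoc, ← hs, IsIso.inv_hom_id]⟩

end RelDoctrine

/-- An extensional relational doctrine with quotients is balanced with all objects
projective iff every surjective arrow splits. -/
theorem statement14 (D : RelDoctrine C P) (hext : D.Extensional) (hquot : D.HasQuotients) :
    (D.BalancedDoc ∧ ∀ X : C, D.ProjectiveObj X) ↔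
      (∀ (X Y : C) (f : X ⟶ Y), D.SurjectiveRel (D.gr f) → ∃ s : Y ⟶ X, s ≫ f = 𝟙 Y) := by
  refine ⟨fun ⟨hbal, hproj⟩ X Y f hf => D.exists_section_of_surjectiveRel hquot hbal (hproj Y) hf,
    fun hsplit => ⟨?_, ?_⟩⟩
  · intro X Y f hinj hsurj
    obtain ⟨s, hs⟩ := hsplit X Y f hsurj
    exact ⟨s, D.comp_eq_id_of_injectiveRel hext hinj hs, hs⟩
  · intro Q X Y f q ρ hρ hq
    obtain ⟨s, hs⟩ := hsplit X Y q (D.surjectiveRel_gr_of_isQuotientArrow hquot hρ hq)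
    exact ⟨f ≫ s, by rw [Category.assoc, hs, Category.comp_id]⟩
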